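/- The graph B_6 is not word-representable. -/

import Mathlib

/-- Two distinct letters `x` and `y` alternate in the word `w` if the subsequence of `w`
formed by all occurrences of `x` and `y` has no two equal consecutive letters. -/
def Alternates {V : Type*} [DecidableEq V] (w : List V) (x y : V) : Prop :=
  (w.filter (fun z => decide (z = x ∨ z = y))).Chain' (· ≠ ·)

/-- A graph `G` is word-representable if there is a word over its vertex set, in which
every vertex occurs, such that two distinct vertices alternate in the word iff
they are adjacent in `G`. -/
def WordRepresentable {V : Type*} [DecidableEq V] (G : SimpleGraph V) : Prop :=
  ∃ w : List V, (∀ v : V, v ∈ w) ∧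
    ∀ x y : V, x ≠ y → (Alternates w x y ↔ G.Adj x y)

/-- The graph `B₆` on vertices `{1,…,8}` (vertex `i` of the paper is `i - 1` here):
a clique on `{1,2,3,4}` together with the edges
`{1,5},{2,5},{3,5},{1,6},{2,6},{4,6},{2,7},{3,8},{5,6},{5,7},{5,8},{6,7},{6,8},{7,8}`. -/
def B6 : SimpleGraph (Fin 8) :=
  SimpleGraph.fromRel (fun a b => (a, b) ∈
    ([(0,1),(0,2),(0,3),(1,2),(1,3),(2,3),
      (0,4),(1,4),(2,4),(0,5),(1,5),(3,5),(1,6),(2,7),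
      (4,5),(4,6),(4,7),(5,6),(5,7),(6,7)] : List (Fin 8 × Fin 8)))

/-! ### Auxiliary: prefix-count characterization of alternation -/

section Alt

variable {V : Type*} [DecidableEq V]

/-- Prefix-count condition: in every prefix, `count y ≤ count x ≤ count y + 1`. -/
def AltCnt (x y : V) (w : List V) : Prop :=
  ∀ n, (w.take n).count y ≤ (w.take n).count x ∧
    (w.take n).count x ≤ (w.take n).count y + 1

/-- The subsequence of `w` on letters `x,y` is a prefix of `x y x y ⋯`. -/
def AltC : V → V → List V → Prop
  | _, _, [] => True
  | x, y, z :: t => if z = y then False else if z = x then AltC y x t else AltC x y t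

/-- A list is a prefix of the pattern `x y x y ⋯`. -/
def AltL : V → V → List V → Prop
  | _, _, [] => True
  | x, y, z :: t => z = x ∧ AltL y x t

theorem altC_nil (x y : V) : AltC x y [] := trivial

theorem altC_cons (x y z : V) (t : List V) :
    AltC x y (z :: t) = if z = y then False else if z = x then AltC y x t else AltC x y t :=
  rfl

theorem altL_nil (x y : V) : AltL x y [] := trivial

theorem altL_cons (x y z : V) (t : List V) :
    AltL x y (z :: t) = (z = x ∧ AltL y x t) :=
  rfl

theorem altC_iff_altCnt : ∀ (w : List V) (x y : V), x ≠ y → (AltC x y w ↔ AltCnt x y w)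
  | [], x, y, h => by
    constructor
    · intro _ n
      simp [AltCnt]
    · intro _
      exact trivial
  | z :: t, x, y, h => by
    by_cases hzy : z = y
    · rw [hzy, altC_cons, if_pos rfl]
      constructor
      · exact False.elim
      · intro H
        have h1 := (H 1).1
        simp only [List.take_succ_cons, List.take_zero, List.count_cons_self,
          List.count_nil, List.count_cons_of_ne (Ne.symm h)] at h1
        omega
    · by_cases hzx : z = x
      · rw [hzx, altC_cons, if_neg h, if_pos rfl]
        rw [altC_iff_altCnt t y x (Ne.symm h)]
        constructor
        · intro H n
          cases n with
          | zero => simp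
          | succ n =>
            have h1 := H n
            rw [List.take_succ_cons, List.count_cons_self,
              List.count_cons_of_ne h]
            exact ⟨h1.2, Nat.add_le_add_right h1.1 1⟩
        · intro H n
          have h1 := H (n + 1)
          rw [List.take_succ_cons, List.count_cons_self,
            List.count_cons_of_ne h] at h1
          exact ⟨Nat.le_of_succ_le_succ h1.2, h1.1⟩
      · rw [altC_cons, if_neg hzy, if_neg hzx]
        rw [altC_iff_altCnt t x y h]
        constructor
        · intro H n
          cases n with
          | zero => simp
          | succ n =>
            have h1 := H n
            rw [List.take_succ_cons, List.count_cons_of_ne hzx,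
              List.count_cons_of_ne hzy]
            exact h1
        · intro H n
          have h1 := H (n + 1)
          rw [List.take_succ_cons, List.count_cons_of_ne hzx,
            List.count_cons_of_ne hzy] at h1
          exact h1

theorem chain'_cons_altL : ∀ (l : List V) (x y : V), x ≠ y → (∀ a ∈ l, a = x ∨ a = y) →
    (List.Chain' (· ≠ ·) (x :: l) ↔ AltL y x l)
  | [], x, y, h, _ => by
    simp only [List.Chain', List.isChain_singleton]
    exact ⟨fun _ => trivial, fun _ => trivial⟩
  | z :: t, x, y, h, hm => by
    rcases hm z (List.mem_cons_self) with hz | hz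
    · rw [hz, List.Chain', List.isChain_cons_cons, altL_cons]
      constructor
      · intro hc; exact absurd rfl hc.1
      · intro hc; exact absurd hc.1 h
    · rw [hz, List.Chain', List.isChain_cons_cons, altL_cons]
      have IH := chain'_cons_altL t y x (Ne.symm h)
        (fun a ha => (hm a (List.mem_cons_of_mem _ ha)).symm)
      constructor
      · intro hc; exact ⟨rfl, IH.1 hc.2⟩
      · intro hc; exact ⟨h, IH.2 hc.2⟩

theorem chain'_iff_altL (x y : V) (h : x ≠ y) (f : List V) (hm : ∀ a ∈ f, a = x ∨ a = y) :
    List.Chain' (· ≠ ·) f ↔ (AltL x y f ∨ AltL y x f) := by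
  cases f with
  | nil => exact ⟨fun _ => Or.inl trivial, fun _ => List.isChain_nil⟩
  | cons z l =>
    rcases hm z (List.mem_cons_self) with hz | hz
    · rw [hz]
      rw [chain'_cons_altL l x y h (fun a ha => hm a (hz ▸ List.mem_cons_of_mem _ ha))]
      rw [altL_cons, altL_cons]
      constructor
      · intro hc; exact Or.inl ⟨rfl, hc⟩
      · rintro (⟨-, hc⟩ | ⟨hc, -⟩)
        · exact hc
        · exact absurd hc h
    · rw [hz]
      rw [chain'_cons_altL l y x (Ne.symm h)
        (fun a ha => (hm a (hz ▸ List.mem_cons_of_mem _ ha)).symm)]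
      rw [altL_cons, altL_cons]
      constructor
      · intro hc; exact Or.inr ⟨rfl, hc⟩
      · rintro (⟨hc, -⟩ | ⟨-, hc⟩)
        · exact absurd hc (Ne.symm h)
        · exact hc

theorem filter_or_comm (x y : V) (w : List V) :
    w.filter (fun z => decide (z = y ∨ z = x)) = w.filter (fun z => decide (z = x ∨ z = y)) :=
  List.filter_congr (fun a _ => decide_eq_decide.mpr or_comm)

theorem altC_iff_altL : ∀ (w : List V) (x y : V), x ≠ y →
    (AltC x y w ↔ AltL x y (w.filter (fun z => decide (z = x ∨ z = y))))
  | [], x, y, h => by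
    simp only [List.filter_nil]
    exact ⟨fun _ => trivial, fun _ => trivial⟩
  | z :: t, x, y, h => by
    by_cases hzy : z = y
    · rw [hzy, List.filter_cons_of_pos (by simp), altC_cons, if_pos rfl, altL_cons]
      constructor
      · exact False.elim
      · intro hc; exact absurd hc.1 (Ne.symm h)
    · by_cases hzx : z = x
      · rw [hzx, List.filter_cons_of_pos (by simp), altC_cons, if_neg h, if_pos rfl, altL_cons]
        rw [altC_iff_altL t y x (Ne.symm h), filter_or_comm]
        constructor
        · intro hc; exact ⟨rfl, hc⟩
        · intro hc; exact hc.2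
      · rw [List.filter_cons_of_neg (by simp [hzx, hzy]), altC_cons, if_neg hzy, if_neg hzx]
        exact altC_iff_altL t x y h

theorem alternates_iff_altC {w : List V} {x y : V} (h : x ≠ y) :
    Alternates w x y ↔ (AltC x y w ∨ AltC y x w) := by
  unfold Alternates
  rw [chain'_iff_altL x y h _ (fun a ha => of_decide_eq_true (List.mem_filter.1 ha).2)]
  rw [altC_iff_altL w x y h, altC_iff_altL w y x (Ne.symm h), filter_or_comm]

theorem altC_indexOf_lt : ∀ (w : List V) (x y : V), x ≠ y → AltC x y w → y ∈ w →
    w.idxOf x < w.idxOf y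
  | z :: t, x, y, h, hc, hy => by
    by_cases hzy : z = y
    · rw [hzy, altC_cons, if_pos rfl] at hc
      exact hc.elim
    · by_cases hzx : z = x
      · rw [hzx] at hzy ⊢
        rw [List.idxOf_cons_self, List.idxOf_cons_ne _ hzy]
        exact Nat.succ_pos _
      · rw [altC_cons, if_neg hzy, if_neg hzx] at hc
        have hyt : y ∈ t := by
          rcases List.mem_cons.1 hy with e | e
          · exact absurd e.symm hzy
          · exact e
        rw [List.idxOf_cons_ne _ hzx, List.idxOf_cons_ne _ hzy]
        exact Nat.succ_lt_succ (altC_indexOf_lt t x y h hc hyt)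

end Alt

/-! ### Auxiliary: exhaustive search over vertex orders of `B6` -/

def adjB (u v : Fin 8) : Bool := (8409025240102567230 : Nat).testBit (u.val * 8 + v.val)

def violCond (u a b v : Fin 8) : Bool :=
  adjB u a && adjB a b && adjB b v && adjB u v && !(adjB u b && adjB a v)

def loopU (z b a : Fin 8) : List (Fin 8) → Bool
  | [] => false
  | u :: t => violCond u a b z || loopU z b a t

def loopA (z b : Fin 8) : List (Fin 8) → Bool
  | [] => false
  | a :: t => (adjB a b && loopU z b a t) || loopA z b t

def loopB (z : Fin 8) : List (Fin 8) → Bool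
  | [] => false
  | b :: t => (adjB b z && loopA z b t) || loopB z t

def dfs : Nat → List (Fin 8) → List (Fin 8) → Bool
  | 0, _, _ => false
  | fuel+1, pref, rest =>
    match rest with
    | [] => false
    | _ :: _ => rest.all fun z => loopB z pref || dfs fuel (z :: pref) (rest.erase z)

set_option maxHeartbeats 8000000 in
set_option maxRecDepth 10000 in
theorem dfs_result : dfs 8 [] [0,1,2,3,4,5,6,7] = true := by decide

theorem loopU_correct : ∀ (t : List (Fin 8)) (z b a : Fin 8), loopU z b a t = true →
    ∃ u ∈ t, violCond u a b z = true
  | u :: t, z, b, a, hl => by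
    simp only [loopU, Bool.or_eq_true] at hl
    rcases hl with hl | hl
    · exact ⟨u, List.mem_cons_self, hl⟩
    · obtain ⟨u', hu', hc⟩ := loopU_correct t z b a hl
      exact ⟨u', List.mem_cons_of_mem _ hu', hc⟩

theorem loopA_correct : ∀ (t : List (Fin 8)) (z b : Fin 8), loopA z b t = true →
    ∃ u a, List.Sublist [u, a] t.reverse ∧ violCond u a b z = true
  | a :: t, z, b, hl => by
    simp only [loopA, Bool.or_eq_true, Bool.and_eq_true] at hl
    rcases hl with ⟨-, hl⟩ | hl
    · obtain ⟨u, hu, hc⟩ := loopU_correct t z b a hl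
      refine ⟨u, a, ?_, hc⟩
      rw [List.reverse_cons]
      exact List.Sublist.append (List.singleton_sublist.mpr (List.mem_reverse.mpr hu))
        (List.Sublist.refl [a])
    · obtain ⟨u, a', hs, hc⟩ := loopA_correct t z b hl
      refine ⟨u, a', hs.trans ?_, hc⟩
      rw [List.reverse_cons]
      exact List.sublist_append_left _ _

theorem loopB_correct : ∀ (t : List (Fin 8)) (z : Fin 8), loopB z t = true →
    ∃ u a b, List.Sublist [u, a, b] t.reverse ∧ violCond u a b z = true
  | b :: t, z, hl => by
    simp only [loopB, Bool.or_eq_true, Bool.and_eq_true] at hl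
    rcases hl with ⟨-, hl⟩ | hl
    · obtain ⟨u, a, hs, hc⟩ := loopA_correct t z b hl
      refine ⟨u, a, b, ?_, hc⟩
      rw [List.reverse_cons]
      exact List.Sublist.append hs (List.Sublist.refl [b])
    · obtain ⟨u, a, b', hs, hc⟩ := loopB_correct t z hl
      refine ⟨u, a, b', hs.trans ?_, hc⟩
      rw [List.reverse_cons]
      exact List.sublist_append_left _ _

theorem dfs_correct : ∀ (fuel : Nat) (rest pref : List (Fin 8)), dfs fuel pref rest = true →
    ∀ l : List (Fin 8), l.Perm rest →
      ∃ u a b v, List.Sublist [u, a, b, v] (pref.reverse ++ l) ∧ violCond u a b v = true := by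
  intro fuel
  induction fuel with
  | zero => intro rest pref h; simp [dfs] at h
  | succ fuel IH =>
    intro rest pref h l hperm
    cases rest with
    | nil => simp [dfs] at h
    | cons r rs =>
      cases l with
      | nil =>
        have := hperm.length_eq
        simp at this
      | cons z t =>
        have hz : z ∈ r :: rs := hperm.subset (List.mem_cons_self)
        simp only [dfs, List.all_eq_true] at h
        have hzz := h z hz
        rw [Bool.or_eq_true] at hzz
        rcases hzz with hzz | hzz
        · obtain ⟨u, a, b, hs, hc⟩ := loopB_correct pref z hzz
          refine ⟨u, a, b, z, ?_, hc⟩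
          have h1 : List.Sublist ([u, a, b] ++ [z]) (pref.reverse ++ z :: t) :=
            List.Sublist.append hs ((List.nil_sublist t).cons₂ z)
          simpa using h1
        · have h1 : (r :: rs).Perm (z :: (r :: rs).erase z) := List.perm_cons_erase hz
          have h2 : t.Perm ((r :: rs).erase z) := (hperm.trans h1).cons_inv
          obtain ⟨u, a, b, v, hs, hc⟩ := IH _ _ hzz t h2
          refine ⟨u, a, b, v, ?_, hc⟩
          rw [List.reverse_cons, List.append_assoc] at hs
          simpa using hs

theorem adjB_adj : ∀ u v : Fin 8, B6.Adj u v ↔ adjB u v = true := by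
  simp only [B6, SimpleGraph.fromRel_adj]
  decide

/-- The graph `B₆` is not word-representable. -/
theorem stmt14 : ¬ WordRepresentable B6 := by
  rintro ⟨w, hw, hrep⟩
  -- the prefix-count condition holds for every edge, directed by first occurrence
  have edge_altCnt : ∀ x y : Fin 8, B6.Adj x y → w.idxOf x < w.idxOf y → AltCnt x y w := by
    intro x y hadj hlt
    have hne : x ≠ y := hadj.ne
    have halt : Alternates w x y := (hrep x y hne).2 hadj
    rcases (alternates_iff_altC hne).1 halt with h1 | h1
    · exact (altC_iff_altCnt w x y hne).1 h1
    · have := altC_indexOf_lt w y x hne.symm h1 (hw x)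
      omega
  -- sort the vertices by first occurrence
  set r : Fin 8 → Fin 8 → Prop := fun u v => w.idxOf u ≤ w.idxOf v with hr
  haveI : DecidableRel r := fun u v => Nat.decLe _ _
  haveI : IsTotal (Fin 8) r := ⟨fun a b => Nat.le_total _ _⟩
  haveI : IsTrans (Fin 8) r := ⟨fun a b c => Nat.le_trans⟩
  set L := List.insertionSort r [0,1,2,3,4,5,6,7] with hL
  have hperm : L.Perm [0,1,2,3,4,5,6,7] := List.perm_insertionSort r _
  have hsorted : L.Pairwise r := List.pairwise_insertionSort r _
  have hnodup : L.Nodup := hperm.symm.nodup (by decide)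
  have hstrict : L.Pairwise (fun u v => w.idxOf u < w.idxOf v) := by
    refine (hsorted.and hnodup).imp ?_
    rintro a b ⟨hle, hne⟩
    exact lt_of_le_of_ne hle (fun e => hne ((List.idxOf_inj (hw a)).1 e))
  -- extract a violating quadruple
  obtain ⟨u, a, b, v, hsub, hcond⟩ := dfs_correct 8 _ [] dfs_result L hperm
  simp only [List.reverse_nil, List.nil_append] at hsub
  have hpw := List.Pairwise.sublist hsub hstrict
  rw [List.pairwise_cons] at hpw
  obtain ⟨h1, hpw⟩ := hpw
  rw [List.pairwise_cons] at hpw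
  obtain ⟨h2, hpw⟩ := hpw
  rw [List.pairwise_cons] at hpw
  obtain ⟨h3, -⟩ := hpw
  have hua : w.idxOf u < w.idxOf a := h1 a (by simp)
  have hub : w.idxOf u < w.idxOf b := h1 b (by simp)
  have huv : w.idxOf u < w.idxOf v := h1 v (by simp)
  have hab : w.idxOf a < w.idxOf b := h2 b (by simp)
  have hav : w.idxOf a < w.idxOf v := h2 v (by simp)
  have hbv : w.idxOf b < w.idxOf v := h3 v (by simp)
  simp only [violCond, Bool.and_eq_true, Bool.not_eq_true', Bool.and_eq_false_iff] at hcond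
  obtain ⟨⟨⟨⟨eua, eab⟩, ebv⟩, euv⟩, emiss⟩ := hcond
  have cua : AltCnt u a w := edge_altCnt u a ((adjB_adj u a).2 eua) hua
  have cab : AltCnt a b w := edge_altCnt a b ((adjB_adj a b).2 eab) hab
  have cbv : AltCnt b v w := edge_altCnt b v ((adjB_adj b v).2 ebv) hbv
  have cuv : AltCnt u v w := edge_altCnt u v ((adjB_adj u v).2 euv) huv
  have cub : AltCnt u b w := fun n =>
    ⟨le_trans (cab n).1 (cua n).1,
      le_trans (cuv n).2 (Nat.add_le_add_right (cbv n).1 1)⟩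
  have cav : AltCnt a v w := fun n =>
    ⟨le_trans (cbv n).1 (cab n).1, le_trans (cua n).1 (cuv n).2⟩
  have hubne : u ≠ b := fun e => by rw [e] at hub; exact lt_irrefl _ hub
  have havne : a ≠ v := fun e => by rw [e] at hav; exact lt_irrefl _ hav
  have adjub : B6.Adj u b :=
    (hrep u b hubne).1 ((alternates_iff_altC hubne).2
      (Or.inl ((altC_iff_altCnt w u b hubne).2 cub)))
  have adjav : B6.Adj a v :=
    (hrep a v havne).1 ((alternates_iff_altC havne).2
      (Or.inl ((altC_iff_altCnt w a v havne).2 cav)))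
  rcases emiss with e | e
  · rw [(adjB_adj u b).1 adjub] at e
    exact absurd e (by simp)
  · rw [(adjB_adj a v).1 adjav] at e
    exact absurd e (by simp)
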